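/- arXiv:1504.03311 — 5 statements merged into one kernel-verified Lean document; each statement's English description precedes it below -/
import Mathlib

section
/- For every integer n ≥ 1 and all indices 1 ≤ a, b ≤ n, the Jucys–Murphy elements commute: J_a · J_b = J_b · J_a in the group algebra ℂ[S_n]. -/
/-- The Jucys–Murphy element `J_b = ∑_{a < b} (a b)` in the group algebra `ℂ[S_n]`. -/
noncomputable def jucysMurphy (n : ℕ) (b : Fin n) : MonoidAlgebra ℂ (Equiv.Perm (Fin n)) :=
  ∑ a ∈ Finset.univ.filter (fun a : Fin n => a < b),
    MonoidAlgebra.of ℂ (Equiv.Perm (Fin n)) (Equiv.swap a b)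

/-! A permutation fixing `b` and stabilising `{a | a < b}` conjugates `J_b` to itself, since
`σ (a b) σ⁻¹ = (σa σb) = (σa b)`. For `i < a < b` the transposition `(i a)` is such a permutation,
so every summand of `J_a` commutes with `J_b`. -/

open Equiv Finset MonoidAlgebra

theorem Equiv.swap_apply_mem_iff {α : Type*} [DecidableEq α] {s : Set α} {x y : α}
    (hx : x ∈ s) (hy : y ∈ s) (z : α) : swap x y z ∈ s ↔ z ∈ s := by
  rcases eq_or_ne z x with rfl | hzx
  · simp [hx, hy]
  rcases eq_or_ne z y with rfl | hzy
  · simp [hx, hy]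
  rw [swap_apply_of_ne_of_ne hzx hzy]

theorem MonoidAlgebra.commute_of_sum_of_swap {k α : Type*} [Semiring k] [DecidableEq α]
    {s : Finset α} {b : α} {σ : Perm α} (hb : σ b = b) (hs : ∀ a, a ∈ s ↔ σ a ∈ s) :
    Commute (of k (Perm α) σ) (∑ a ∈ s, of k (Perm α) (swap a b)) := by
  rw [Commute, SemiconjBy, mul_sum, sum_mul]
  refine sum_equiv σ hs fun a _ => ?_
  rw [← map_mul, ← map_mul, mul_swap_eq_swap_mul, hb]

theorem jucysMurphy_commute_of_lt {n : ℕ} {a b : Fin n} (hab : a < b) :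
    Commute (jucysMurphy n a) (jucysMurphy n b) := by
  refine Commute.sum_left _ _ _ fun i hi => commute_of_sum_of_swap ?_ fun j => ?_
  · have hia : i < a := (mem_filter.mp hi).2
    exact swap_apply_of_ne_of_ne (hia.trans hab).ne' hab.ne'
  · have hib : i < b := (mem_filter.mp hi).2.trans hab
    simpa only [mem_filter, mem_univ, true_and, Set.mem_Iio] using
      (swap_apply_mem_iff (s := Set.Iio b) hib hab j).symm

theorem jucysMurphy_commute_general (n : ℕ) (a b : Fin n) :
    jucysMurphy n a * jucysMurphy n b = jucysMurphy n b * jucysMurphy n a := by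
  rcases lt_trichotomy a b with h | rfl | h
  · exact (jucysMurphy_commute_of_lt h).eq
  · rfl
  · exact (jucysMurphy_commute_of_lt h).eq.symm

/-- The Jucys–Murphy elements commute pairwise in `ℂ[S_n]`. -/
theorem jucysMurphy_commute (n : ℕ) (hn : 1 ≤ n) (a b : Fin n) :
    jucysMurphy n a * jucysMurphy n b = jucysMurphy n b * jucysMurphy n a :=
  jucysMurphy_commute_general n a b
end

section
/- For every integer n ≥ 1 and every symmetric polynomial f ∈ ℂ[x_1,…,x_n] (i.e. f is invariant under every permutation of its variables), the element f(J_1,…,J_n) of ℂ[S_n], obtained by substituting the Jucys–Murphy element J_b for the variable x_b (this substitution is well defined because the J_b commute pairwise), lies in the center Z(ℂ[S_n]) of the group algebra. -/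
/-- Evaluation of a multivariate polynomial `f ∈ ℂ[x_1,…,x_n]` at the Jucys–Murphy
elements `J_1,…,J_n`, substituting `J_b` for the variable `x_b`.  (Since the `J_b`
commute pairwise, the ordered products appearing here coincide with any other
ordering of the factors.) -/
noncomputable def jmEval (n : ℕ) (f : MvPolynomial (Fin n) ℂ) :
    MonoidAlgebra ℂ (Equiv.Perm (Fin n)) :=
  ∑ m ∈ f.support, f.coeff m • (List.ofFn fun b : Fin n => jucysMurphy n b ^ m b).prod

/-!
The center of `ℂ[S_n]` is the commutant of the adjacent transpositions `s_i = (i i+1)`. The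
relations `s_i J_i = J_{i+1} s_i - 1`, `s_i J_{i+1} = J_i s_i + 1` and `s_i J_b = J_b s_i`
(`b ≠ i, i+1`) show that `s_i` commutes with `J_i + J_{i+1}`, with `J_i J_{i+1}` and with the
other `J_b`. A polynomial invariant under `x_i ↔ x_{i+1}` lies in the algebra generated by
`x_i + x_{i+1}`, `x_i x_{i+1}` and the other variables: averaging `f = (f + s_i f) / 2` reduces this
to `x^m + s_i x^m`, a monomial in the other variables times
`x_i^a x_{i+1}^b + x_i^b x_{i+1}^a = (x_i x_{i+1})^a (x_i^d + x_{i+1}^d)` (`b = a + d`), and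
two-variable power sums are polynomials in the sum and the product.
-/

section PowerSums

variable {A S : Type*} [CommRing A] [SetLike S A] [SubringClass S A] {s : S} {x y : A}

theorem pow_add_pow_mem (hadd : x + y ∈ s) (hmul : x * y ∈ s) (k : ℕ) :
    x ^ k + y ^ k ∈ s := by
  induction k using Nat.twoStepInduction with
  | zero => simpa using add_mem (one_mem s) (one_mem s)
  | one => simpa using hadd
  | more k ih ih' =>
    have newton : x ^ (k + 2) + y ^ (k + 2) =
        (x + y) * (x ^ (k + 1) + y ^ (k + 1)) - x * y * (x ^ k + y ^ k) := by ring
    rw [newton]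
    exact sub_mem (mul_mem hadd ih') (mul_mem hmul ih)

theorem pow_mul_pow_add_pow_mul_pow_mem (hadd : x + y ∈ s) (hmul : x * y ∈ s) (a b : ℕ) :
    x ^ a * y ^ b + x ^ b * y ^ a ∈ s := by
  wlog hab : a ≤ b generalizing a b
  · simpa only [add_comm] using this b a (le_of_not_ge hab)
  obtain ⟨d, rfl⟩ := Nat.exists_eq_add_of_le hab
  have factor : x ^ a * y ^ (a + d) + x ^ (a + d) * y ^ a = (x * y) ^ a * (x ^ d + y ^ d) := by
    ring
  rw [factor]
  exact mul_mem (pow_mem hmul a) (pow_add_pow_mem hadd hmul d)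

end PowerSums

namespace MvPolynomial

variable {R σ : Type*} {i j : σ}

section CommSemiring

variable [CommSemiring R]

theorem monomial_eq_smul_X_pow_mul_X_pow_mul (hij : i ≠ j) (m : σ →₀ ℕ) (c : R) :
    monomial m c = c • (X i ^ m i * X j ^ m j * monomial ((m.erase i).erase j) 1) := by
  have decomp : Finsupp.single i (m i) + Finsupp.single j (m j) + (m.erase i).erase j = m := by
    rw [add_assoc, ← Finsupp.erase_ne hij.symm, Finsupp.single_add_erase,
      Finsupp.single_add_erase]
  rw [X_pow_eq_monomial, X_pow_eq_monomial, monomial_mul, monomial_mul, smul_monomial, decomp,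
    smul_eq_mul, mul_one, mul_one, mul_one]

theorem monomial_erase_erase_mem_supported (m : σ →₀ ℕ) :
    monomial ((m.erase i).erase j) (1 : R) ∈ supported R {i, j}ᶜ := by
  classical
  rw [monomial_eq, C_1, one_mul, supported_eq_adjoin_X]
  refine Subalgebra.prod_mem _ fun b hb =>
    pow_mem (Algebra.subset_adjoin (Set.mem_image_of_mem X ?_)) _
  simp only [Finsupp.mem_support_iff, Finsupp.erase_apply] at hb
  simp only [Set.mem_compl_iff, Set.mem_insert_iff, Set.mem_singleton_iff, not_or]
  constructor <;> rintro rfl <;> simp_all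

theorem rename_swap_eq_self_of_mem_supported [DecidableEq σ] {p : MvPolynomial σ R}
    (hp : p ∈ supported R {i, j}ᶜ) : rename (Equiv.swap i j) p = p := by
  refine AlgHom.adjoin_le_equalizer (rename (Equiv.swap i j)) (AlgHom.id R _) ?_ hp
  rintro _ ⟨b, hb, rfl⟩
  simp only [Set.mem_compl_iff, Set.mem_insert_iff, Set.mem_singleton_iff, not_or] at hb
  simp [Equiv.swap_apply_of_ne_of_ne hb.1 hb.2]

end CommSemiring

theorem mem_adjoin_sup_supported_of_rename_swap_eq [CommRing R] [Invertible (2 : R)]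
    [DecidableEq σ] (hij : i ≠ j) {f : MvPolynomial σ R} (hf : rename (Equiv.swap i j) f = f) :
    f ∈ Algebra.adjoin R {X i + X j, X i * X j} ⊔ supported R {i, j}ᶜ := by
  have hsym (g : MvPolynomial σ R) : g + rename (Equiv.swap i j) g ∈
      Algebra.adjoin R {X i + X j, X i * X j} ⊔ supported R {i, j}ᶜ := by
    induction g using induction_on' with
    | add p q hp hq =>
      rw [map_add, add_add_add_comm]
      exact add_mem hp hq
    | monomial m c =>
      have hfix := rename_swap_eq_self_of_mem_supported
        (monomial_erase_erase_mem_supported (R := R) (i := i) (j := j) m)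
      rw [monomial_eq_smul_X_pow_mul_X_pow_mul hij, map_smul, map_mul, map_mul, map_pow, map_pow,
        rename_X, rename_X, Equiv.swap_apply_left, Equiv.swap_apply_right, hfix, ← smul_add,
        ← add_mul, mul_comm (X j ^ m i)]
      refine Subalgebra.smul_mem _ (Subalgebra.mul_mem _ ?_ ?_) c
      · exact Algebra.mem_sup_left <| pow_mul_pow_add_pow_mul_pow_mem
          (Algebra.subset_adjoin (by simp)) (Algebra.subset_adjoin (by simp)) _ _
      · exact Algebra.mem_sup_right (monomial_erase_erase_mem_supported m)
  have half : f = (⅟2 : R) • (f + rename (Equiv.swap i j) f) := by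
    rw [hf, ← two_smul R f, smul_smul, invOf_mul_self, one_smul]
  rw [half]
  exact Subalgebra.smul_mem _ (hsym f) _

end MvPolynomial

theorem MonoidAlgebra.mem_center_of_forall_commute_of {k G : Type*} [CommSemiring k] [Monoid G]
    {S : Set G} (hS : Submonoid.closure S = ⊤) {z : MonoidAlgebra k G}
    (hz : ∀ g ∈ S, Commute (of k G g) z) : z ∈ Subalgebra.center k (MonoidAlgebra k G) := by
  have hG (g : G) : Commute (of k G g) z := by
    induction (hS ▸ Submonoid.mem_top g : g ∈ Submonoid.closure S)
      using Submonoid.closure_induction with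
    | mem g hg => exact hz g hg
    | one => simpa only [map_one] using Commute.one_left z
    | mul g h _ _ hg hh => simpa only [map_mul] using hg.mul_left hh
  rw [Subalgebra.mem_center_iff]
  intro x
  induction x using MonoidAlgebra.induction_on with
  | of g => exact (hG g).eq
  | add a b ha hb => rw [add_mul, mul_add, ha, hb]
  | smul r a ha => rw [smul_mul_assoc, mul_smul_comm, ha]

open Equiv MonoidAlgebra MvPolynomial

theorem Equiv.swap_apply_lt_iff {α : Type*} [LT α] [DecidableEq α] {a b c x : α}
    (h : a < c ↔ b < c) : swap a b x < c ↔ x < c := by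
  rw [swap_apply_def]
  split_ifs with hxa hxb <;> subst_vars <;> tauto

section JucysMurphy

variable {n : ℕ}

theorem of_mul_jucysMurphy (σ : Perm (Fin n)) (b : Fin n) :
    of ℂ _ σ * jucysMurphy n b
      = (∑ a ∈ Finset.univ.filter (· < b), of ℂ _ (swap (σ a) (σ b))) * of ℂ _ σ := by
  rw [jucysMurphy, Finset.mul_sum, Finset.sum_mul]
  refine Finset.sum_congr rfl fun a _ => ?_
  rw [← map_mul, ← map_mul, swap_apply_apply, inv_mul_cancel_right]

theorem commute_of_jucysMurphy {σ : Perm (Fin n)} {b : Fin n} (hb : σ b = b)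
    (hlt : ∀ a, σ a < b ↔ a < b) : Commute (of ℂ _ σ) (jucysMurphy n b) := by
  rw [Commute, SemiconjBy, of_mul_jucysMurphy, hb, jucysMurphy]
  congr 1
  exact Finset.sum_equiv σ (by simp [hlt]) fun _ _ => rfl

theorem jucysMurphy_commute_s1 (b c : Fin n) : Commute (jucysMurphy n b) (jucysMurphy n c) := by
  wlog hbc : b < c generalizing b c
  · rcases (not_lt.mp hbc).eq_or_lt with rfl | hcb
    · rfl
    · exact (this c b hcb).symm
  refine Commute.sum_left _ _ _ fun a ha => ?_
  have hac : a < c := (Finset.mem_filter.mp ha).2.trans hbc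
  exact commute_of_jucysMurphy (swap_apply_of_ne_of_ne hac.ne' hbc.ne')
    fun x => swap_apply_lt_iff (iff_of_true hac hbc)

open scoped IsMulCommutative

instance isMulCommutative_adjoin_jucysMurphy :
    IsMulCommutative (Algebra.adjoin ℂ (Set.range (jucysMurphy n))) :=
  Algebra.isMulCommutative_adjoin ℂ <| by
    rintro _ ⟨b, rfl⟩ _ ⟨c, rfl⟩
    exact (jucysMurphy_commute_s1 b c).eq

/-- `aeval` needs a commutative target, so we evaluate in the commutative subalgebra generated by
the Jucys–Murphy elements. -/
noncomputable def jmEvalHom (n : ℕ) :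
    MvPolynomial (Fin n) ℂ →ₐ[ℂ] MonoidAlgebra ℂ (Perm (Fin n)) :=
  (Algebra.adjoin ℂ (Set.range (jucysMurphy n))).val.comp <|
    MvPolynomial.aeval fun b => ⟨jucysMurphy n b, Algebra.subset_adjoin ⟨b, rfl⟩⟩

theorem jmEvalHom_X (b : Fin n) : jmEvalHom n (X b) = jucysMurphy n b := by
  simp [jmEvalHom]

theorem jmEval_eq_jmEvalHom (f : MvPolynomial (Fin n) ℂ) : jmEval n f = jmEvalHom n f := by
  conv_rhs => rw [f.as_sum]
  rw [jmEval, map_sum]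
  refine Finset.sum_congr rfl fun m _ => ?_
  rw [jmEvalHom, AlgHom.comp_apply, aeval_monomial, Finsupp.prod_fintype _ _ fun _ => pow_zero _,
    ← List.prod_ofFn, Algebra.algebraMap_eq_smul_one, smul_mul_assoc, one_mul, map_smul,
    Subalgebra.val_apply, SubmonoidClass.coe_list_prod, List.map_ofFn]
  rfl

theorem Fin.filter_lt_succ_eq_insert (i : Fin n) :
    Finset.univ.filter (· < i.succ)
      = insert i.castSucc (Finset.univ.filter (· < i.castSucc)) := by
  ext a
  simp only [Finset.mem_filter, Finset.mem_univ, true_and, Finset.mem_insert, Fin.lt_def,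
    Fin.ext_iff, Fin.val_castSucc, Fin.val_succ]
  omega

theorem jucysMurphy_succ (i : Fin n) :
    jucysMurphy (n + 1) i.succ = of ℂ _ (swap i.castSucc i.succ)
      + ∑ a ∈ Finset.univ.filter (· < i.castSucc), of ℂ _ (swap a i.succ) := by
  rw [jucysMurphy, Fin.filter_lt_succ_eq_insert, Finset.sum_insert (by simp)]

theorem of_swap_mul_jucysMurphy_castSucc (i : Fin n) :
    of ℂ _ (swap i.castSucc i.succ) * jucysMurphy (n + 1) i.castSucc
      = jucysMurphy (n + 1) i.succ * of ℂ _ (swap i.castSucc i.succ) - 1 := by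
  rw [of_mul_jucysMurphy, swap_apply_left, jucysMurphy_succ, add_mul, ← map_mul, swap_mul_self,
    map_one, add_sub_cancel_left]
  refine congrArg (· * _) (Finset.sum_congr rfl fun a ha => ?_)
  have ha : a < i.castSucc := (Finset.mem_filter.mp ha).2
  rw [swap_apply_of_ne_of_ne ha.ne (ha.trans Fin.castSucc_lt_succ).ne]

theorem of_swap_mul_jucysMurphy_succ (i : Fin n) :
    of ℂ _ (swap i.castSucc i.succ) * jucysMurphy (n + 1) i.succ
      = jucysMurphy (n + 1) i.castSucc * of ℂ _ (swap i.castSucc i.succ) + 1 := by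
  rw [of_mul_jucysMurphy, swap_apply_right, Fin.filter_lt_succ_eq_insert,
    Finset.sum_insert (by simp), swap_apply_left, swap_comm, add_mul, ← map_mul, swap_mul_self,
    map_one, add_comm (1 : MonoidAlgebra ℂ _)]
  refine congrArg (· * _ + 1) (Finset.sum_congr rfl fun a ha => ?_)
  have ha : a < i.castSucc := (Finset.mem_filter.mp ha).2
  rw [swap_apply_of_ne_of_ne ha.ne (ha.trans Fin.castSucc_lt_succ).ne]

theorem commute_of_swap_jucysMurphy_of_ne (i : Fin n) {b : Fin (n + 1)} (hb : b ≠ i.castSucc)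
    (hb' : b ≠ i.succ) :
    Commute (of ℂ _ (swap i.castSucc i.succ)) (jucysMurphy (n + 1) b) := by
  refine commute_of_jucysMurphy (swap_apply_of_ne_of_ne hb hb') fun _ => swap_apply_lt_iff ?_
  rw [Ne, Fin.ext_iff] at hb hb'
  simp only [Fin.lt_def, Fin.val_castSucc, Fin.val_succ] at hb hb' ⊢
  omega

theorem commute_of_swap_jucysMurphy_add (i : Fin n) :
    Commute (of ℂ _ (swap i.castSucc i.succ))
      (jucysMurphy (n + 1) i.castSucc + jucysMurphy (n + 1) i.succ) := by
  rw [Commute, SemiconjBy, mul_add, of_swap_mul_jucysMurphy_castSucc, of_swap_mul_jucysMurphy_succ,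
    add_mul]
  abel

theorem commute_of_swap_jucysMurphy_mul (i : Fin n) :
    Commute (of ℂ _ (swap i.castSucc i.succ))
      (jucysMurphy (n + 1) i.castSucc * jucysMurphy (n + 1) i.succ) := by
  set s := of ℂ _ (swap i.castSucc i.succ)
  set P := jucysMurphy (n + 1) i.castSucc
  set Q := jucysMurphy (n + 1) i.succ
  calc s * (P * Q) = (Q * s - 1) * Q := by rw [← mul_assoc, of_swap_mul_jucysMurphy_castSucc]
    _ = Q * (P * s + 1) - Q := by rw [sub_mul, one_mul, mul_assoc, of_swap_mul_jucysMurphy_succ]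
    _ = Q * P * s := by rw [mul_add, mul_one, add_sub_cancel_right, mul_assoc]
    _ = P * Q * s := by rw [(jucysMurphy_commute_s1 _ _).eq]

theorem commute_of_swap_jmEvalHom (i : Fin n) {f : MvPolynomial (Fin (n + 1)) ℂ}
    (hf : rename (swap i.castSucc i.succ) f = f) :
    Commute (of ℂ _ (swap i.castSucc i.succ)) (jmEvalHom (n + 1) f) := by
  set C :=
    (Subalgebra.centralizer ℂ {of ℂ _ (swap i.castSucc i.succ)}).comap (jmEvalHom (n + 1))
  have mem_C (p : MvPolynomial (Fin (n + 1)) ℂ) :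
      p ∈ C ↔ Commute (of ℂ _ (swap i.castSucc i.succ)) (jmEvalHom (n + 1) p) := by
    simp [C, Subalgebra.mem_centralizer_iff, Commute, SemiconjBy]
  have hle : Algebra.adjoin ℂ {X i.castSucc + X i.succ, X i.castSucc * X i.succ}
      ⊔ supported ℂ {i.castSucc, i.succ}ᶜ ≤ C := by
    refine sup_le (Algebra.adjoin_le ?_) (Algebra.adjoin_le ?_)
    · rintro _ (rfl | rfl) <;> rw [SetLike.mem_coe, mem_C]
      · simpa only [map_add, jmEvalHom_X] using commute_of_swap_jucysMurphy_add i
      · simpa only [map_mul, jmEvalHom_X] using commute_of_swap_jucysMurphy_mul i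
    · rintro _ ⟨b, hb, rfl⟩
      simp only [Set.mem_compl_iff, Set.mem_insert_iff, Set.mem_singleton_iff, not_or] at hb
      rw [SetLike.mem_coe, mem_C, jmEvalHom_X]
      exact commute_of_swap_jucysMurphy_of_ne i hb.1 hb.2
  exact (mem_C f).mp (hle (mem_adjoin_sup_supported_of_rename_swap_eq Fin.castSucc_lt_succ.ne hf))

end JucysMurphy

/-- Any symmetric polynomial of the Jucys–Murphy elements lies in the center of `ℂ[S_n]`. -/
theorem jmEval_symmetric_mem_center (n : ℕ) (hn : 1 ≤ n) (f : MvPolynomial (Fin n) ℂ)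
    (hf : f.IsSymmetric) :
    jmEval n f ∈ Subalgebra.center ℂ (MonoidAlgebra ℂ (Equiv.Perm (Fin n))) := by
  obtain ⟨n, rfl⟩ := Nat.exists_eq_add_of_le' hn
  refine MonoidAlgebra.mem_center_of_forall_commute_of (Perm.mclosure_swap_castSucc_succ n) ?_
  rintro _ ⟨i, rfl⟩
  rw [jmEval_eq_jmEvalHom]
  exact commute_of_swap_jmEvalHom i (hf _)
end

section
/- Let n ≥ 1 and let λ = (λ_1 ≥ … ≥ λ_ℓ) be a partition of d. Then in ℂ[S_n] the sum, over all sequences (τ_1,…,τ_d) of transpositions of S_n whose signature equals λ, of the products τ_1 τ_2 ⋯ τ_d equals (d! / (λ_1! ⋯ λ_ℓ!)) · m_λ(J_1,…,J_n), where m_λ is the monomial symmetric polynomial in n variables evaluated at the Jucys–Murphy elements. -/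
/-- The signature of a sequence of transpositions `(a_m b_m)`, `a_m < b_m`, encoded by the
function `b : Fin d → Fin n` of second (larger) elements: the multiset of nonzero
multiplicities with which each value of `Fin n` occurs among `b_1,…,b_d`.  It is a
partition of `d` (as a multiset of parts). -/
def signatureOf {n d : ℕ} (b : Fin d → Fin n) : Multiset ℕ :=
  (Finset.univ.val.map fun v : Fin n =>
    (Finset.univ.filter fun m : Fin d => b m = v).card).filter (fun c => c ≠ 0)

/-!
Group the sequences by their larger entries `b = (b_1, …, b_d)`: the sum over the smaller
entries `a_m < b_m` factors as `J_{b_1} ⋯ J_{b_d}`. The Jucys–Murphy elements commute, since a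
permutation fixing `c` and preserving `{a | a < c}` commutes with `J_c`; so this product is the
value of the monomial `X_{b_1} ⋯ X_{b_d}` in the commutative algebra they generate. In
`ℂ[X_1, …, X_n]`, every monomial of shape `λ` arises from exactly `d! / (λ_1! ⋯ λ_ℓ!)` words `b`:
the number of words with given content, a coefficient of `(X_1 + ⋯ + X_n) ^ d`.
-/

open Equiv Finset
open scoped IsMulCommutative

theorem sum_piFinset_prod_ofFn {R κ : Type*} [Semiring R] [DecidableEq κ] {d : ℕ}
    (t : Fin d → Finset κ) (f : Fin d → κ → R) :
    ∑ a ∈ Fintype.piFinset t, (List.ofFn fun m => f m (a m)).prod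
      = (List.ofFn fun m => ∑ x ∈ t m, f m x).prod := by
  induction d with
  | zero => simp
  | succ d ih =>
    have hpi : Fintype.piFinset t = (t 0 ×ˢ Fintype.piFinset fun i => t i.succ).map
        (Fin.consEquiv fun _ => κ).toEmbedding := by
      have h := filter_piFinset_eq_map_consEquiv t fun _ => True
      simp only [filter_true] at h
      exact h
    rw [hpi, sum_map, List.ofFn_succ, List.prod_cons, ← ih (fun i => t i.succ), sum_mul_sum,
      ← sum_product']
    simp [List.ofFn_succ]

theorem Subalgebra.val_prod_univ_eq_prod_ofFn {R A : Type*} [CommSemiring R] [Semiring A] [Algebra R A]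
    {S : Subalgebra R A} [IsMulCommutative S] {d : ℕ} (f : Fin d → S) :
    S.val (∏ i, f i) = (List.ofFn fun i => S.val (f i)).prod := by
  rw [← List.prod_ofFn, map_list_prod, List.map_ofFn]
  rfl

section Words

variable {σ : Type*} {d : ℕ}

def Sym.ofFn (b : Fin d → σ) : Sym σ d := ⟨univ.val.map b, by simp⟩

theorem Sym.count_ofFn [DecidableEq σ] (b : Fin d → σ) (v : σ) :
    (Sym.ofFn b : Multiset σ).count v = #{m | b m = v} := by
  rw [Sym.ofFn, Sym.coe_mk, Multiset.count_map, card, filter_val]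
  simp_rw [eq_comm]

theorem MvPolynomial.prod_map_X_eq_monomial {R : Type*} [CommSemiring R] [DecidableEq σ]
    (s : Multiset σ) :
    (s.map (X : σ → MvPolynomial σ R)).prod = monomial (Multiset.toFinsupp s) 1 := by
  rw [prod_multiset_map_count, ← prod_X_pow_eq_monomial, Multiset.toFinsupp_support]
  simp

theorem MvPolynomial.prod_X_eq_monomial_ofFn {R : Type*} [CommSemiring R] [DecidableEq σ]
    (b : Fin d → σ) :
    ∏ m, (X (b m) : MvPolynomial σ R)
      = monomial (Multiset.toFinsupp (Sym.ofFn b : Multiset σ)) 1 := by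
  rw [← prod_map_X_eq_monomial, Sym.ofFn, Sym.coe_mk, Multiset.map_map]
  rfl

theorem Sym.card_filter_ofFn_eq [Fintype σ] [DecidableEq σ] (s : Sym σ d) :
    #{b : Fin d → σ | Sym.ofFn b = s} = (s : Multiset σ).countPerms := by
  -- both sides are the coefficient of `X ^ s` in `(∑ i, X i) ^ d`
  have h := MvPolynomial.coeff_sum_X_pow_of_fintype (R := ℕ)
    (Multiset.toFinsupp (s : Multiset σ)) d
  rw [Fintype.sum_pow, MvPolynomial.coeff_sum] at h
  simp_rw [MvPolynomial.prod_X_eq_monomial_ofFn, MvPolynomial.coeff_monomial,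
    EmbeddingLike.apply_eq_iff_eq, Sym.coe_inj] at h
  have hsum : ((Multiset.toFinsupp (s : Multiset σ)).sum fun _ m => m) = d :=
    (Multiset.toFinsupp_sum_eq _).trans s.2
  rw [sum_boole, Nat.cast_id, hsum, if_pos rfl, Nat.cast_id] at h
  exact h

theorem Nat.Partition.ofSym_parts_eq [Fintype σ] [DecidableEq σ] (s : Sym σ d) :
    (Nat.Partition.ofSym s).parts
      = (univ.val.map fun v => (s : Multiset σ).count v).filter (· ≠ 0) := by
  have hdedup : (s : Multiset σ).dedup = univ.val.filter fun v => (s : Multiset σ).count v ≠ 0 :=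
    Multiset.Nodup.ext (Multiset.nodup_dedup _) (univ.nodup.filter _) |>.2 fun v => by simp
  change (s : Multiset σ).dedup.map _ = _
  rw [Multiset.filter_map, hdedup]
  rfl

theorem signatureOf_eq_ofSym_parts {n : ℕ} (b : Fin d → Fin n) :
    signatureOf b = (Nat.Partition.ofSym (Sym.ofFn b)).parts := by
  simp_rw [Nat.Partition.ofSym_parts_eq, Sym.count_ofFn]
  rfl

end Words

section Multinomial

theorem Multiset.prod_map_factorial_ne_zero (m : Multiset ℕ) : (m.map Nat.factorial).prod ≠ 0 :=
  prod_ne_zero (by simp [Nat.factorial_ne_zero])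

theorem Multiset.multinomial_mul_prod_factorial (m : Multiset ℕ) :
    m.multinomial * (m.map Nat.factorial).prod = m.sum.factorial := by
  induction m using Multiset.induction_on with
  | empty => simp
  | cons x m ih =>
    rw [multinomial_cons, map_cons, prod_cons, sum_cons,
      ← Nat.choose_mul_factorial_mul_factorial (Nat.le_add_right x m.sum),
      Nat.add_sub_cancel_left, ← ih]
    ring

theorem Nat.Partition.multinomial_parts_eq_factorial_div {d : ℕ} (lam : Nat.Partition d) :
    (lam.parts.multinomial : ℂ) = d.factorial / (lam.parts.map Nat.factorial).prod := by
  have h := lam.parts.multinomial_mul_prod_factorial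
  rw [lam.parts_sum] at h
  rw [eq_div_iff (mod_cast lam.parts.prod_map_factorial_ne_zero)]
  exact_mod_cast h

theorem Multiset.countPerms_mul_prod_factorial {σ : Type*} [DecidableEq σ] (m : Multiset σ) :
    m.countPerms * ((m.dedup.map m.count).map Nat.factorial).prod = (card m).factorial := by
  rw [countPerms, Finsupp.multinomial_eq, toFinsupp_support, ← toFinset_sum_count_eq,
    ← Nat.multinomial_spec, mul_comm, map_map]
  rfl

theorem Sym.countPerms_eq_multinomial_ofSym_parts {σ : Type*} [DecidableEq σ] {d : ℕ}
    (s : Sym σ d) : (s : Multiset σ).countPerms = (Nat.Partition.ofSym s).parts.multinomial := by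
  refine Nat.eq_of_mul_eq_mul_right
    (Nat.pos_of_ne_zero (Nat.Partition.ofSym s).parts.prod_map_factorial_ne_zero) ?_
  rw [Multiset.multinomial_mul_prod_factorial, Nat.Partition.parts_sum]
  have h := (s : Multiset σ).countPerms_mul_prod_factorial
  rwa [s.card_coe] at h

end Multinomial

open MvPolynomial in
theorem sum_prod_X_of_signatureOf_eq (R : Type*) [CommSemiring R] {n d : ℕ}
    (lam : Nat.Partition d) :
    ∑ b ∈ univ.filter (fun b : Fin d → Fin n => signatureOf b = lam.parts),
        ∏ m, (X (b m) : MvPolynomial (Fin n) R)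
      = lam.parts.multinomial • msymm (Fin n) R lam := by
  let G : Sym (Fin n) d → MvPolynomial (Fin n) R :=
    fun s => if Nat.Partition.ofSym s = lam then (s.1.map X).prod else 0
  have hG : ∀ b : Fin d → Fin n,
      (if signatureOf b = lam.parts then ∏ m, (X (b m) : MvPolynomial (Fin n) R) else 0)
        = G (Sym.ofFn b) := by
    intro b
    simp only [G, signatureOf_eq_ofSym_parts, ← Nat.Partition.ext_iff, Sym.ofFn, Multiset.map_map]
    rfl
  have hmsymm : msymm (Fin n) R lam = ∑ s, G s := by
    rw [msymm, ← sum_subtype {s | Nat.Partition.ofSym s = lam} (by simp)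
      (fun s : Sym (Fin n) d => (s.1.map X).prod), sum_filter]
  rw [sum_filter, sum_congr rfl fun b _ => hG b, ← sum_fiberwise' _ Sym.ofFn, hmsymm, smul_sum]
  refine sum_congr rfl fun s _ => ?_
  rw [sum_const, Sym.card_filter_ofFn_eq, Sym.countPerms_eq_multinomial_ofSym_parts]
  by_cases hs : Nat.Partition.ofSym s = lam
  · rw [hs]
  · simp [G, hs]

section JucysMurphy

variable {n : ℕ}

theorem commute_of_perm_jucysMurphy {σ : Perm (Fin n)} {c : Fin n} (hσc : σ c = c)
    (hσ : ∀ a, σ a < c ↔ a < c) :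
    Commute (MonoidAlgebra.of ℂ _ σ) (jucysMurphy n c) := by
  have hconj : ∀ a, MonoidAlgebra.of ℂ _ σ * MonoidAlgebra.of ℂ _ (swap a c)
      = MonoidAlgebra.of ℂ _ (swap (σ a) c) * MonoidAlgebra.of ℂ _ σ := by
    intro a
    rw [← map_mul, ← map_mul, mul_swap_eq_swap_mul, hσc]
  rw [jucysMurphy, Commute, SemiconjBy, mul_sum, sum_mul]
  simp_rw [hconj]
  exact sum_equiv σ (by simp [hσ]) fun _ _ => rfl

theorem commute_jucysMurphy_of_lt {b c : Fin n} (hbc : b < c) :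
    Commute (jucysMurphy n b) (jucysMurphy n c) := by
  refine Commute.sum_left _ _ _ fun a ha => ?_
  have hab : a < b := (mem_filter.1 ha).2
  refine commute_of_perm_jucysMurphy (swap_apply_of_ne_of_ne (hab.trans hbc).ne' hbc.ne')
    fun x => ?_
  rw [swap_apply_def]
  split_ifs <;> subst_vars <;> simp only [hbc, hab.trans hbc]

theorem commute_jucysMurphy (v w : Fin n) : Commute (jucysMurphy n v) (jucysMurphy n w) := by
  rcases lt_trichotomy v w with h | rfl | h
  · exact commute_jucysMurphy_of_lt h
  · exact Commute.refl _
  · exact (commute_jucysMurphy_of_lt h).symm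

variable (n)

noncomputable abbrev jucysMurphyAlgebra : Subalgebra ℂ (MonoidAlgebra ℂ (Perm (Fin n))) :=
  Algebra.adjoin ℂ (Set.range (jucysMurphy n))

instance : IsMulCommutative (jucysMurphyAlgebra n) :=
  Algebra.isMulCommutative_adjoin ℂ <| by
    rintro _ ⟨v, rfl⟩ _ ⟨w, rfl⟩
    exact (commute_jucysMurphy v w).eq

noncomputable def jucysMurphyAlgebra.gen (b : Fin n) : jucysMurphyAlgebra n :=
  ⟨jucysMurphy n b, Algebra.subset_adjoin ⟨b, rfl⟩⟩

theorem jmEval_eq_val_aeval (f : MvPolynomial (Fin n) ℂ) :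
    jmEval n f = (jucysMurphyAlgebra n).val (MvPolynomial.aeval (jucysMurphyAlgebra.gen n) f) := by
  rw [MvPolynomial.aeval_def, MvPolynomial.eval₂_eq', map_sum, jmEval]
  refine sum_congr rfl fun m _ => ?_
  rw [← Algebra.smul_def, map_smul, Subalgebra.val_prod_univ_eq_prod_ofFn]
  simp [jucysMurphyAlgebra.gen]

theorem val_aeval_prod_X_eq_prod_jucysMurphy {d : ℕ} (b : Fin d → Fin n) :
    (jucysMurphyAlgebra n).val (MvPolynomial.aeval (jucysMurphyAlgebra.gen n)
        (∏ m, (MvPolynomial.X (b m) : MvPolynomial (Fin n) ℂ)))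
      = (List.ofFn fun m => jucysMurphy n (b m)).prod := by
  rw [map_prod, Subalgebra.val_prod_univ_eq_prod_ofFn]
  simp [jucysMurphyAlgebra.gen]

variable {n}

theorem sum_prod_swap_eq_prod_jucysMurphy {d : ℕ} (b : Fin d → Fin n) :
    ∑ a ∈ Fintype.piFinset (fun m => univ.filter (· < b m)),
        MonoidAlgebra.of ℂ _ (List.ofFn fun m => swap (a m) (b m)).prod
      = (List.ofFn fun m => jucysMurphy n (b m)).prod := by
  simp_rw [map_list_prod, List.map_ofFn]
  exact sum_piFinset_prod_ofFn _ fun m x => MonoidAlgebra.of ℂ _ (swap x (b m))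

theorem sum_transposition_paths_eq_sum_prod_jucysMurphy {d : ℕ} (P : (Fin d → Fin n) → Prop)
    [DecidablePred P] :
    ∑ p ∈ univ.filter fun p : (Fin d → Fin n) × (Fin d → Fin n) =>
          (∀ m, p.1 m < p.2 m) ∧ P p.2,
        MonoidAlgebra.of ℂ _ (List.ofFn fun m => swap (p.1 m) (p.2 m)).prod
      = ∑ b ∈ univ.filter P, (List.ofFn fun m => jucysMurphy n (b m)).prod := by
  rw [sum_finset_product_right _ (univ.filter P)
    (fun b => Fintype.piFinset fun m => univ.filter (· < b m)) (by simp [and_comm])]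
  simp_rw [sum_prod_swap_eq_prod_jucysMurphy]

end JucysMurphy

theorem sum_transposition_paths_eq_msymm_jucysMurphy_general (n : ℕ) (d : ℕ)
    (lam : Nat.Partition d) :
    ∑ p ∈ Finset.univ.filter
        (fun p : (Fin d → Fin n) × (Fin d → Fin n) =>
          (∀ m, p.1 m < p.2 m) ∧ signatureOf p.2 = lam.parts),
      MonoidAlgebra.of ℂ (Equiv.Perm (Fin n))
        (List.ofFn fun m : Fin d => Equiv.swap (p.1 m) (p.2 m)).prod
    = ((d.factorial : ℂ) / ((lam.parts.map Nat.factorial).prod : ℂ)) •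
        jmEval n (MvPolynomial.msymm (Fin n) ℂ lam) := by
  rw [sum_transposition_paths_eq_sum_prod_jucysMurphy (signatureOf · = lam.parts),
    ← Nat.Partition.multinomial_parts_eq_factorial_div, Nat.cast_smul_eq_nsmul, jmEval_eq_val_aeval,
    ← map_nsmul, ← map_nsmul, ← sum_prod_X_of_signatureOf_eq, map_sum, map_sum]
  simp_rw [val_aeval_prod_X_eq_prod_jucysMurphy]

/-- The sum, over all `d`-step sequences of transpositions of `S_n` with signature `λ`,
of the ordered products `τ_1 ⋯ τ_d ∈ ℂ[S_n]`, equals `(d! / (λ_1! ⋯ λ_ℓ!)) · m_λ(J_1,…,J_n)`,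
with `m_λ` the monomial symmetric polynomial. -/
theorem sum_transposition_paths_eq_msymm_jucysMurphy (n : ℕ) (hn : 1 ≤ n) (d : ℕ)
    (lam : Nat.Partition d) :
    ∑ p ∈ Finset.univ.filter
        (fun p : (Fin d → Fin n) × (Fin d → Fin n) =>
          (∀ m, p.1 m < p.2 m) ∧ signatureOf p.2 = lam.parts),
      MonoidAlgebra.of ℂ (Equiv.Perm (Fin n))
        (List.ofFn fun m : Fin d => Equiv.swap (p.1 m) (p.2 m)).prod
    = ((d.factorial : ℂ) / ((lam.parts.map Nat.factorial).prod : ℂ)) •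
        jmEval n (MvPolynomial.msymm (Fin n) ℂ lam) :=
  sum_transposition_paths_eq_msymm_jucysMurphy_general n d lam
end

section
/- For every integer n ≥ 1 and every 0 ≤ j ≤ n, the j-th elementary symmetric polynomial evaluated at the Jucys–Murphy elements satisfies e_j(J_1,…,J_n) = Σ_{σ ∈ S_n, n − c(σ) = j} σ in ℂ[S_n], where c(σ) denotes the number of cycles of σ (fixed points counted as cycles). -/
/-- The total number of cycles of a permutation, fixed points counted as cycles. -/
def cyclesCount {n : ℕ} (σ : Equiv.Perm (Fin n)) : ℕ := (Equiv.Perm.partition σ).parts.card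

open Finset

namespace Equiv.Perm

variable {α : Type*} [Fintype α] [DecidableEq α]

theorem support_mul_swap {σ : Perm α} {a x : α} (ha : σ a ≠ a) (hx : σ x = x) :
    (σ * swap a x).support = insert x σ.support := by
  have hax : a ≠ x := fun h => ha (h ▸ hx)
  ext y
  rw [mem_insert, mem_support, mem_support, mul_apply]
  rcases eq_or_ne y a with rfl | hya
  · simp [hx, hax.symm, ha]
  rcases eq_or_ne y x with rfl | hyx
  · simp [hx ▸ σ.injective.ne hax]
  · simp [swap_apply_of_ne_of_ne hya hyx, hyx]

theorem IsCycle.mul_swap {c : Perm α} (hc : c.IsCycle) {a x : α} (ha : c a ≠ a) (hx : c x = x) :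
    (c * swap a x).IsCycle := by
  set g := c * swap a x
  have hax : a ≠ x := fun h => ha (h ▸ hx)
  have hga : g a = x := by simp [g, hx]
  have hgx : g x = c a := by simp [g]
  have hpow : ∀ i : ℕ, g.SameCycle a ((c ^ i) a) := by
    intro i
    induction i with
    | zero => exact SameCycle.refl _ _
    | succ i ih =>
      rw [pow_succ', mul_apply]
      rcases eq_or_ne ((c ^ i) a) a with h | h
      · rw [h, ← hgx, ← hga]
        exact (SameCycle.refl _ _).apply_right.apply_right
      · have hne : (c ^ i) a ≠ x :=
          pow_apply_eq_self_of_apply_eq_self hx i ▸ (c ^ i).injective.ne hax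
        have hg : g ((c ^ i) a) = c ((c ^ i) a) := by simp [g, swap_apply_of_ne_of_ne h hne]
        exact hg ▸ sameCycle_apply_right.2 ih
  refine ⟨a, hga ▸ hax.symm, fun y hy => ?_⟩
  rw [← mem_support, support_mul_swap ha hx, mem_insert] at hy
  rcases hy with rfl | hy
  · exact hga ▸ (SameCycle.refl _ _).apply_right
  · obtain ⟨i, rfl⟩ := hc.exists_pow_eq ha (mem_support.1 hy)
    exact hpow i

/-- The absolute length of `σ`: the least number of transpositions with product `σ`. -/
def absLength (σ : Perm α) : ℕ := (σ.cycleType.map (· - 1)).sum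

theorem absLength_add_card_cycleType (σ : Perm α) :
    σ.absLength + Multiset.card σ.cycleType = #σ.support := by
  have hpos : ∀ k ∈ σ.cycleType, k - 1 + 1 = k := fun k hk =>
    Nat.sub_add_cancel (one_le_two.trans (two_le_of_mem_cycleType hk))
  calc σ.absLength + Multiset.card σ.cycleType
      = (σ.cycleType.map (· - 1)).sum + (σ.cycleType.map fun _ => 1).sum := by
        rw [absLength, Multiset.map_const', Multiset.sum_replicate, smul_eq_mul, mul_one]
    _ = (σ.cycleType.map fun k => k - 1 + 1).sum := Multiset.sum_map_add.symm
    _ = #σ.support := by rw [Multiset.map_congr rfl hpos, Multiset.map_id', sum_cycleType]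

theorem card_sub_card_parts_partition (σ : Perm α) :
    Fintype.card α - σ.partition.parts.card = σ.absLength := by
  have h := σ.absLength_add_card_cycleType
  have hle : #σ.support ≤ Fintype.card α := card_le_univ _
  rw [parts_partition, Multiset.card_add, Multiset.card_replicate]
  omega

theorem absLength_eq_zero_iff {σ : Perm α} : σ.absLength = 0 ↔ σ = 1 := by
  refine ⟨fun h => ?_, fun h => by simp [h, absLength]⟩
  rw [← cycleType_eq_zero, Multiset.eq_zero_iff_forall_notMem]
  intro k hk
  have h2 := two_le_of_mem_cycleType hk
  have h1 := Multiset.sum_eq_zero_iff.1 h (k - 1) (Multiset.mem_map_of_mem _ hk)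
  omega

theorem absLength_mul_swap {σ : Perm α} {a x : α} (hx : σ x = x) (hax : a ≠ x) :
    (σ * swap a x).absLength = σ.absLength + 1 := by
  by_cases ha : σ a = a
  · have hdisj : σ.Disjoint (swap a x) := by
      intro y
      by_cases hy : y = a ∨ y = x
      · rcases hy with rfl | rfl <;> simp [ha, hx]
      · push Not at hy; exact Or.inr (swap_apply_of_ne_of_ne hy.1 hy.2)
    simp [absLength, hdisj.cycleType_mul, (isCycle_swap hax).cycleType, card_support_swap hax]
  · set c := σ.cycleOf a
    set d := σ * c⁻¹
    have hc : c.IsCycle := σ.isCycle_cycleOf ha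
    have hca : c a ≠ a := by rwa [σ.cycleOf_apply_self]
    have hcx : c x = x := by
      rw [← notMem_support] at hx ⊢
      exact fun h => hx (σ.support_cycleOf_le a h)
    have hdc : d.Disjoint c := disjoint_mul_inv_of_mem_cycleFactorsFinset
      (cycleOf_mem_cycleFactorsFinset_iff.2 (mem_support.2 ha))
    have hdx : d x = x := by rw [mul_apply, inv_eq_iff_eq.2 hcx.symm, hx]
    have hdisj : d.Disjoint (c * swap a x) := by
      intro y
      refine or_iff_not_imp_left.2 fun hy => ?_
      have hya : y ≠ a := fun h => hca (h ▸ (hdc y).resolve_left hy)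
      have hyx : y ≠ x := fun h => hy (h ▸ hdx)
      simpa [swap_apply_of_ne_of_ne hya hyx] using (hdc y).resolve_left hy
    have hσ : σ = d * c := (inv_mul_cancel_right σ c).symm
    have hσ' : σ * swap a x = d * (c * swap a x) := by rw [hσ, mul_assoc]
    have hcard : 1 ≤ #c.support := card_pos.2 ⟨a, mem_support.2 hca⟩
    rw [hσ', hσ, absLength, absLength, hdisj.cycleType_mul, hdc.cycleType_mul,
      (hc.mul_swap hca hcx).cycleType, hc.cycleType, support_mul_swap hca hcx,
      card_insert_of_notMem (notMem_support.2 hcx)]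
    simp only [Multiset.map_add, Multiset.sum_add, Multiset.map_singleton, Multiset.sum_singleton]
    omega

def supportedOn (s : Finset α) : Finset (Perm α) := {σ | σ.support ⊆ s}

theorem mem_supportedOn {s : Finset α} {σ : Perm α} : σ ∈ supportedOn s ↔ σ.support ⊆ s := by
  simp [supportedOn]

theorem supportedOn_empty : supportedOn (∅ : Finset α) = {1} := by
  ext σ
  simp [mem_supportedOn, support_eq_empty_iff]

theorem supportedOn_univ : supportedOn (univ : Finset α) = univ :=
  eq_univ_of_forall fun _ => mem_supportedOn.2 (subset_univ _)

theorem filter_supportedOn_absLength_eq_zero (s : Finset α) :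
    {σ ∈ supportedOn s | σ.absLength = 0} = {1} := by
  ext σ
  simp only [mem_filter, mem_singleton, absLength_eq_zero_iff, and_iff_right_iff_imp]
  rintro rfl
  simp [mem_supportedOn]

theorem mul_swap_mem_supportedOn {s : Finset α} {σ : Perm α} {a b : α}
    (hσ : σ ∈ supportedOn s) (ha : a ∈ s) (hb : b ∈ s) : σ * swap a b ∈ supportedOn s := by
  rw [mem_supportedOn] at hσ ⊢
  refine (support_mul_le σ _).trans (union_subset hσ fun y hy => ?_)
  rcases eq_or_ne a b with rfl | hab
  · simp at hy
  · rw [support_swap hab, mem_insert, mem_singleton] at hy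
    rcases hy with rfl | rfl <;> assumption

theorem filter_supportedOn_insert_apply_eq_self {s : Finset α} {m : α} (hm : m ∉ s) :
    {τ ∈ supportedOn (insert m s) | τ m = m} = supportedOn s := by
  ext τ
  simp only [mem_filter, mem_supportedOn]
  refine ⟨fun ⟨hτ, hτm⟩ y hy => ?_, fun hτ => ⟨hτ.trans (subset_insert m s), ?_⟩⟩
  · exact (mem_insert.1 (hτ hy)).resolve_left fun h => mem_support.1 hy (h ▸ hτm)
  · exact notMem_support.1 fun h => hm (hτ h)

theorem sum_supportedOn_sum_mul_swap {M : Type*} [AddCommMonoid M] {s : Finset α} {m : α}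
    (hm : m ∉ s) (F : Perm α → M) :
    ∑ σ ∈ supportedOn s, ∑ a ∈ s, F (σ * swap a m) =
      ∑ τ ∈ supportedOn (insert m s) with τ m ≠ m, F τ := by
  rw [← sum_product']
  refine sum_nbij' (fun p => p.1 * swap p.2 m) (fun τ => (τ * swap (τ⁻¹ m) m, τ⁻¹ m))
    ?_ ?_ ?_ ?_ fun _ _ => rfl
  · rintro ⟨σ, a⟩ h
    obtain ⟨hσ, ha⟩ := mem_product.1 h
    rw [← filter_supportedOn_insert_apply_eq_self hm, mem_filter] at hσ
    have ham : a ≠ m := ne_of_mem_of_not_mem ha hm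
    refine mem_filter.2 ⟨mul_swap_mem_supportedOn hσ.1 (mem_insert_of_mem ha)
      (mem_insert_self m s), ?_⟩
    simp [hσ.2 ▸ σ.injective.ne ham]
  · intro τ h
    obtain ⟨hτ, hτm⟩ := mem_filter.1 h
    have hτa : τ (τ⁻¹ m) = m := τ.apply_symm_apply m
    have ham : τ⁻¹ m ≠ m := fun h => hτm (by rwa [h] at hτa)
    have ha : τ⁻¹ m ∈ s := (mem_insert.1 (mem_supportedOn.1 hτ
      (mem_support.2 (hτa.trans_ne ham.symm)))).resolve_left ham
    rw [mem_product, ← filter_supportedOn_insert_apply_eq_self hm, mem_filter]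
    exact ⟨⟨mul_swap_mem_supportedOn hτ (mem_insert_of_mem ha) (mem_insert_self m s),
      by simp⟩, ha⟩
  · rintro ⟨σ, a⟩ h
    have hσm : σ m = m := by
      rw [← filter_supportedOn_insert_apply_eq_self hm] at h
      exact (mem_filter.1 (mem_product.1 h).1).2
    have hinv : (σ * swap a m)⁻¹ m = a := by
      rw [inv_eq_iff_eq, mul_apply, swap_apply_left, hσm]
    dsimp only
    rw [hinv, mul_swap_mul_self]
  · intro τ _
    simp [mul_swap_mul_self]

theorem sum_supportedOn_insert_absLength_succ {R : Type*} [Semiring R] {s : Finset α} {m : α}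
    (hm : m ∉ s) (j : ℕ) :
    ∑ τ ∈ supportedOn (insert m s) with τ.absLength = j + 1, MonoidAlgebra.of R _ τ =
      ∑ σ ∈ supportedOn s with σ.absLength = j + 1, MonoidAlgebra.of R _ σ +
        (∑ σ ∈ supportedOn s with σ.absLength = j, MonoidAlgebra.of R _ σ) *
          ∑ a ∈ s, MonoidAlgebra.of R _ (swap a m) := by
  let F : Perm α → MonoidAlgebra R (Perm α) := fun τ =>
    if τ.absLength = j + 1 then MonoidAlgebra.of R _ τ else 0
  have hF : ∀ σ ∈ supportedOn s, ∀ a ∈ s,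
      (if σ.absLength = j then MonoidAlgebra.of R _ σ else 0) * MonoidAlgebra.of R _ (swap a m) =
        F (σ * swap a m) := by
    intro σ hσ a ha
    rw [← filter_supportedOn_insert_apply_eq_self hm, mem_filter] at hσ
    simp only [F, absLength_mul_swap hσ.2 (ne_of_mem_of_not_mem ha hm), add_left_inj]
    split_ifs <;> simp
  rw [← sum_filter_add_sum_filter_not _ fun τ => τ m = m, filter_comm,
    filter_supportedOn_insert_apply_eq_self hm, filter_comm]
  congr 1
  calc _ = ∑ τ ∈ supportedOn (insert m s) with τ m ≠ m, F τ := sum_filter _ _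
    _ = ∑ σ ∈ supportedOn s, ∑ a ∈ s, F (σ * swap a m) :=
      (sum_supportedOn_sum_mul_swap hm F).symm
    _ = _ := by
      rw [sum_filter, sum_mul]
      refine sum_congr rfl fun σ hσ => ?_
      rw [mul_sum]
      exact sum_congr rfl fun a ha => (hF σ hσ a ha).symm

end Equiv.Perm

theorem List.prod_ofFn_eq_prod_ofFn_mul {M : Type*} [Monoid M] :
    ∀ {n : ℕ} {f g : Fin n → M} {m : Fin n}, (∀ b < m, f b = g b) → (∀ b, m ≤ b → g b = 1) →
      (∀ b, m < b → f b = 1) → (List.ofFn f).prod = (List.ofFn g).prod * f m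
  | 0, _, _, m, _, _, _ => m.elim0
  | n + 1, f, g, m, hfg, hg, hf => by
    rw [List.ofFn_succ', List.ofFn_succ', List.prod_concat, List.prod_concat]
    induction m using Fin.lastCases with
    | last =>
      rw [hg _ le_rfl, mul_one]
      congr 3
      exact funext fun b => hfg _ (Fin.castSucc_lt_last b)
    | cast m =>
      rw [hf _ (Fin.castSucc_lt_last m), hg _ (Fin.castSucc_lt_last m).le, mul_one, mul_one]
      exact prod_ofFn_eq_prod_ofFn_mul (fun b hb => hfg _ (Fin.castSucc_lt_castSucc_iff.2 hb))
        (fun b hb => hg _ (Fin.castSucc_le_castSucc_iff.2 hb))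
        (fun b hb => hf _ (Fin.castSucc_lt_castSucc_iff.2 hb))

section Ordered

variable {M : Type*} {n : ℕ}

def orderedProd [Monoid M] (v : Fin n → M) (t : Finset (Fin n)) : M :=
  (List.ofFn fun b => if b ∈ t then v b else 1).prod

theorem orderedProd_empty [Monoid M] (v : Fin n → M) : orderedProd v ∅ = 1 := by
  simp [orderedProd]

theorem orderedProd_insert [Monoid M] (v : Fin n → M) {s : Finset (Fin n)} {m : Fin n}
    (hs : ∀ b ∈ s, b < m) : orderedProd v (insert m s) = orderedProd v s * v m := by
  have hm : ∀ b, m ≤ b → b ∉ s := fun b hb h => (hs b h).not_ge hb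
  rw [orderedProd, orderedProd,
    List.prod_ofFn_eq_prod_ofFn_mul (m := m) (g := fun b => if b ∈ s then v b else 1)
      (fun b hb => ?_) (fun b hb => ?_) (fun b hb => ?_), if_pos (mem_insert_self m s)]
  · simp [hb.ne]
  · simp [hm b hb]
  · simp [hb.ne', hm b hb.le]

def orderedEsymm [Semiring M] (v : Fin n → M) (s : Finset (Fin n)) (j : ℕ) : M :=
  ∑ t ∈ powersetCard j s, orderedProd v t

variable [Semiring M] (v : Fin n → M)

theorem orderedEsymm_zero (s : Finset (Fin n)) : orderedEsymm v s 0 = 1 := by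
  simp [orderedEsymm, orderedProd_empty]

theorem orderedEsymm_empty_succ (j : ℕ) : orderedEsymm v ∅ (j + 1) = 0 := by
  rw [orderedEsymm, powersetCard_eq_empty.2 (by simp), sum_empty]

theorem orderedEsymm_insert_succ {s : Finset (Fin n)} {m : Fin n} (hs : ∀ b ∈ s, b < m)
    (j : ℕ) :
    orderedEsymm v (insert m s) (j + 1) = orderedEsymm v s (j + 1) + orderedEsymm v s j * v m := by
  have hm : m ∉ s := fun h => (hs m h).false
  rw [orderedEsymm, powersetCard_succ_insert hm, sum_union, sum_image, orderedEsymm, orderedEsymm,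
    sum_mul]
  · congr 1
    exact sum_congr rfl fun t ht =>
      orderedProd_insert v fun b hb => hs b ((mem_powersetCard.1 ht).1 hb)
  · intro t ht t' ht' h
    have hmt : m ∉ t := fun h => hm ((mem_powersetCard.1 ht).1 h)
    have hmt' : m ∉ t' := fun h => hm ((mem_powersetCard.1 ht').1 h)
    rw [← erase_insert hmt, ← erase_insert hmt', h]
  · refine disjoint_left.2 fun t ht ht' => ?_
    obtain ⟨t', -, rfl⟩ := mem_image.1 ht'
    exact hm ((mem_powersetCard.1 ht).1 (mem_insert_self m t'))

end Ordered

open Equiv Equiv.Perm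

theorem jmEval_esymm (n j : ℕ) :
    jmEval n (MvPolynomial.esymm (Fin n) ℂ j) = orderedEsymm (jucysMurphy n) univ j := by
  change Finsupp.linearCombination ℂ (fun e : Fin n →₀ ℕ => (List.ofFn fun b =>
    jucysMurphy n b ^ e b).prod) (AddMonoidAlgebra.coeff _) = _
  rw [MvPolynomial.esymm_eq_sum_monomial, AddMonoidAlgebra.coeff_sum, map_sum]
  refine sum_congr rfl fun t _ => ?_
  change Finsupp.linearCombination ℂ _ (Finsupp.single _ 1) = _
  rw [Finsupp.linearCombination_single, one_smul, orderedProd]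
  congr 2
  funext b
  by_cases hb : b ∈ t <;> simp [Finset.sum_apply', Finsupp.single_apply, hb]

theorem jucysMurphy_eq_sum (n k : ℕ) (hk : k < n) :
    jucysMurphy n ⟨k, hk⟩ = ∑ a ∈ {b : Fin n | (b : ℕ) < k},
      MonoidAlgebra.of ℂ (Perm (Fin n)) (swap a ⟨k, hk⟩) :=
  rfl

theorem orderedEsymm_jucysMurphy (n : ℕ) {k : ℕ} (hk : k ≤ n) (j : ℕ) :
    orderedEsymm (jucysMurphy n) {b | (b : ℕ) < k} j =
      ∑ σ ∈ supportedOn {b : Fin n | (b : ℕ) < k} with σ.absLength = j,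
        MonoidAlgebra.of ℂ (Perm (Fin n)) σ := by
  have hzero : ∀ k, orderedEsymm (jucysMurphy n) {b | (b : ℕ) < k} 0 =
      ∑ σ ∈ supportedOn {b : Fin n | (b : ℕ) < k} with σ.absLength = 0,
        MonoidAlgebra.of ℂ (Perm (Fin n)) σ := fun k => by
    rw [orderedEsymm_zero, filter_supportedOn_absLength_eq_zero, sum_singleton, map_one]
  induction k generalizing j with
  | zero =>
    rcases j with _ | j
    · exact hzero 0
    · have hempty : ({b | (b : ℕ) < 0} : Finset (Fin n)) = ∅ := by simp
      rw [hempty, orderedEsymm_empty_succ, supportedOn_empty, filter_singleton,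
        if_neg (by rw [absLength_eq_zero_iff.2 rfl]; omega), sum_empty]
  | succ k ih =>
    rcases j with _ | j
    · exact hzero (k + 1)
    · have hins : ({b | (b : ℕ) < k + 1} : Finset (Fin n)) =
          insert ⟨k, hk⟩ ({b | (b : ℕ) < k} : Finset (Fin n)) := by
        ext b
        simp only [mem_filter, mem_univ, true_and, mem_insert, Fin.ext_iff]
        omega
      rw [hins, orderedEsymm_insert_succ _ (fun b hb => by simpa [Fin.lt_def] using hb),
        sum_supportedOn_insert_absLength_succ (by simp), ih (k.le_succ.trans hk),
        ih (k.le_succ.trans hk), jucysMurphy_eq_sum]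

theorem sub_cyclesCount {n : ℕ} (σ : Perm (Fin n)) : n - cyclesCount σ = σ.absLength := by
  rw [cyclesCount]
  simpa only [Fintype.card_fin] using card_sub_card_parts_partition σ

theorem esymm_jucysMurphy_general (n : ℕ) (j : ℕ) :
    jmEval n (MvPolynomial.esymm (Fin n) ℂ j) =
      ∑ σ ∈ Finset.univ.filter (fun σ : Equiv.Perm (Fin n) => n - cyclesCount σ = j),
        MonoidAlgebra.of ℂ (Equiv.Perm (Fin n)) σ := by
  have huniv : ({b | (b : ℕ) < n} : Finset (Fin n)) = univ :=
    filter_true_of_mem fun b _ => b.isLt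
  rw [jmEval_esymm, ← huniv, orderedEsymm_jucysMurphy n le_rfl, huniv, supportedOn_univ]
  simp only [sub_cyclesCount]

/-- The `j`-th elementary symmetric polynomial of the Jucys–Murphy elements equals the sum
of all permutations `σ` with `n − c(σ) = j`, where `c(σ)` is the number of cycles of `σ`. -/
theorem esymm_jucysMurphy (n : ℕ) (hn : 1 ≤ n) (j : ℕ) (hj : j ≤ n) :
    jmEval n (MvPolynomial.esymm (Fin n) ℂ j) =
      ∑ σ ∈ Finset.univ.filter (fun σ : Equiv.Perm (Fin n) => n - cyclesCount σ = j),
        MonoidAlgebra.of ℂ (Equiv.Perm (Fin n)) σ :=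
  esymm_jucysMurphy_general n j
end

section
/- Fix integers n ≥ 1 and d ≥ 0, partitions μ and ν of n, a permutation g ∈ S_n of cycle type ν, a complex number q with q^m ≠ 1 for all integers m ≥ 1, and complex numbers c = (c_1,…,c_N). For each partition λ = (λ_1 ≥ … ≥ λ_ℓ) of d, let N^λ(g,μ) denote the number of sequences (τ_1,…,τ_d) of transpositions of S_n with signature λ such that (τ_1 ⋯ τ_d)^{−1} g has cycle type μ. Then the combinatorial quantum Hurwitz number F^d(t) := (1/n!) Σ_{λ ⊢ d} (λ_1! ⋯ λ_ℓ! / d!) · N^λ(g,μ) · ∏_{i=1}^{ℓ} g_{λ_i}(c,q,t), regarded as a function of the complex variable t, is a polynomial in t of degree at most d. -/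
/-- `N^λ(g,μ)`: the number of `d`-step sequences `(τ_1,…,τ_d)` of transpositions of
`S_n` with signature `λ` such that `(τ_1 ⋯ τ_d)⁻¹ g` has cycle type `μ`. -/
noncomputable def pathCount (n d : ℕ) (lam : Nat.Partition d) (μ : Nat.Partition n)
    (g : Equiv.Perm (Fin n)) : ℕ :=
  (Finset.univ.filter
    (fun p : (Fin d → Fin n) × (Fin d → Fin n) =>
      (∀ m, p.1 m < p.2 m) ∧ signatureOf p.2 = lam.parts ∧
        (((List.ofFn fun m : Fin d => Equiv.swap (p.1 m) (p.2 m)).prod)⁻¹ *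
            g).partition.parts = μ.parts)).card

/-- The combinatorial normalization `z_κ = ∏_i i^{m_i(κ)} m_i(κ)!` of a partition,
given by its multiset of parts `κ`. -/
def zClass (κ : Multiset ℕ) : ℕ :=
  κ.prod * ∏ i ∈ κ.toFinset, (κ.count i).factorial

/-- The power sum `p_κ(c) = ∏_s (c_1^{κ_s} + ⋯ + c_N^{κ_s})` of the parts `κ`. -/
noncomputable def powerSumEval {N : ℕ} (c : Fin N → ℂ) (κ : Multiset ℕ) : ℂ :=
  (κ.map fun s => ∑ i, c i ^ s).prod

/-- The quantum-deformed complete symmetric function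
`g_j(c,q,t) = Σ_{κ ⊢ j} z_κ(q,t)⁻¹ p_κ(c)`, where
`z_κ(q,t)⁻¹ = z_κ⁻¹ ∏_s (1 − t^{κ_s})/(1 − q^{κ_s})`. -/
noncomputable def gqt {N : ℕ} (c : Fin N → ℂ) (q t : ℂ) (j : ℕ) : ℂ :=
  ∑ κ : Nat.Partition j,
    (zClass κ.parts : ℂ)⁻¹ * (κ.parts.map fun s => (1 - t ^ s) / (1 - q ^ s)).prod *
      powerSumEval c κ.parts

/-- The combinatorial quantum Hurwitz number
`F^d(t) = (1/n!) Σ_{λ ⊢ d} (λ_1!⋯λ_ℓ!/d!) N^λ(g,μ) ∏_i g_{λ_i}(c,q,t)`. -/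
noncomputable def Fcomb (n d : ℕ) (μ : Nat.Partition n) (g : Equiv.Perm (Fin n))
    {N : ℕ} (c : Fin N → ℂ) (q t : ℂ) : ℂ :=
  (n.factorial : ℂ)⁻¹ * ∑ lam : Nat.Partition d,
    (((lam.parts.map Nat.factorial).prod : ℂ) / (d.factorial : ℂ)) *
      (pathCount n d lam μ g : ℂ) * (lam.parts.map fun j => gqt c q t j).prod

/-! For fixed `q` and `c`, each `g_j(c,q,t)` is the evaluation at `t` of a polynomial of degree
at most `j`: every summand is a constant times `∏_s (1 - t^{κ_s})/(1 - q^{κ_s})`, a product of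
factors of degrees `κ_s` summing to `j`. Hence `∏_i g_{λ_i}` has degree at most `|λ| = d`, and
`F^d` is a linear combination of such products. -/

open Polynomial

lemma Nat.Partition.natDegree_prod_map_le {R : Type*} [CommSemiring R] {j : ℕ}
    (κ : Nat.Partition j) (f : ℕ → R[X]) (hf : ∀ s, (f s).natDegree ≤ s) :
    (κ.parts.map f).prod.natDegree ≤ j :=
  calc (κ.parts.map f).prod.natDegree
      ≤ (κ.parts.map fun s => (f s).natDegree).sum := by
        simpa only [Multiset.map_map, Function.comp_def] using
          natDegree_multiset_prod_le (κ.parts.map f)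
    _ ≤ (κ.parts.map id).sum := Multiset.sum_map_le_sum_map _ _ fun s _ => hf s
    _ = j := by rw [Multiset.map_id, κ.parts_sum]

noncomputable def deformationFactor (q : ℂ) (s : ℕ) : ℂ[X] :=
  C (1 - q ^ s)⁻¹ * (1 - X ^ s)

lemma natDegree_deformationFactor_le (q : ℂ) (s : ℕ) :
    (deformationFactor q s).natDegree ≤ s :=
  natDegree_C_mul_le _ _ |>.trans <| (natDegree_sub_le _ _).trans (by simp)

lemma eval_deformationFactor (q t : ℂ) (s : ℕ) :
    (deformationFactor q s).eval t = (1 - t ^ s) / (1 - q ^ s) := by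
  simp [deformationFactor, div_eq_inv_mul]

noncomputable def gqtPoly {N : ℕ} (c : Fin N → ℂ) (q : ℂ) (j : ℕ) : ℂ[X] :=
  ∑ κ : Nat.Partition j,
    C ((zClass κ.parts : ℂ)⁻¹ * powerSumEval c κ.parts) *
      (κ.parts.map (deformationFactor q)).prod

lemma natDegree_gqtPoly_le {N : ℕ} (c : Fin N → ℂ) (q : ℂ) (j : ℕ) :
    (gqtPoly c q j).natDegree ≤ j :=
  natDegree_sum_le_of_forall_le _ _ fun κ _ =>
    (natDegree_C_mul_le _ _).trans <|
      κ.natDegree_prod_map_le _ (natDegree_deformationFactor_le q)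

lemma eval_gqtPoly {N : ℕ} (c : Fin N → ℂ) (q t : ℂ) (j : ℕ) :
    (gqtPoly c q j).eval t = gqt c q t j := by
  simp only [gqtPoly, gqt, eval_finsetSum, eval_mul, eval_C, eval_multiset_prod,
    Multiset.map_map, Function.comp_def, eval_deformationFactor]
  exact Finset.sum_congr rfl fun κ _ => by ring

noncomputable def FcombPoly (n d : ℕ) (μ : Nat.Partition n) (g : Equiv.Perm (Fin n))
    {N : ℕ} (c : Fin N → ℂ) (q : ℂ) : ℂ[X] :=
  C (n.factorial : ℂ)⁻¹ * ∑ lam : Nat.Partition d,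
    C (((lam.parts.map Nat.factorial).prod : ℂ) / (d.factorial : ℂ) *
      (pathCount n d lam μ g : ℂ)) * (lam.parts.map (gqtPoly c q)).prod

lemma natDegree_FcombPoly_le (n d : ℕ) (μ : Nat.Partition n) (g : Equiv.Perm (Fin n))
    {N : ℕ} (c : Fin N → ℂ) (q : ℂ) : (FcombPoly n d μ g c q).natDegree ≤ d :=
  (natDegree_C_mul_le _ _).trans <| natDegree_sum_le_of_forall_le _ _ fun lam _ =>
    (natDegree_C_mul_le _ _).trans <| lam.natDegree_prod_map_le _ (natDegree_gqtPoly_le c q)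

lemma eval_FcombPoly (n d : ℕ) (μ : Nat.Partition n) (g : Equiv.Perm (Fin n))
    {N : ℕ} (c : Fin N → ℂ) (q t : ℂ) :
    (FcombPoly n d μ g c q).eval t = Fcomb n d μ g c q t := by
  simp only [FcombPoly, Fcomb, eval_mul, eval_C, eval_finsetSum, eval_multiset_prod,
    Multiset.map_map, Function.comp_def, eval_gqtPoly, mul_assoc]

theorem Fcomb_polynomial_in_t_general (n d : ℕ) (μ : Nat.Partition n)
    (g : Equiv.Perm (Fin n)) (q : ℂ)
    (N : ℕ) (c : Fin N → ℂ) :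
    ∃ P : Polynomial ℂ, P.degree ≤ (d : ℕ) ∧ ∀ t : ℂ, Fcomb n d μ g c q t = P.eval t :=
  ⟨FcombPoly n d μ g c q, degree_le_of_natDegree_le (natDegree_FcombPoly_le n d μ g c q),
    fun t => (eval_FcombPoly n d μ g c q t).symm⟩

/-- The combinatorial quantum Hurwitz number `F^d(t)`, regarded as a function of the
complex variable `t`, is a polynomial in `t` of degree at most `d`. -/
theorem Fcomb_polynomial_in_t (n d : ℕ) (hn : 1 ≤ n) (μ ν : Nat.Partition n)
    (g : Equiv.Perm (Fin n)) (hg : g.partition.parts = ν.parts) (q : ℂ)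
    (hq : ∀ m : ℕ, 1 ≤ m → q ^ m ≠ 1) (N : ℕ) (c : Fin N → ℂ) :
    ∃ P : Polynomial ℂ, P.degree ≤ (d : ℕ) ∧ ∀ t : ℂ, Fcomb n d μ g c q t = P.eval t :=
  Fcomb_polynomial_in_t_general n d μ g q N c
end
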